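/- arXiv:0907.3314 — 2 statements merged into one kernel-verified Lean document; each statement's English description precedes it below -/
import Mathlib

section
/- Fix k ∈ ℕ. Let NC(k) denote the set of noncrossing partitions of {1,…,k} and NC_h(k) the set of noncrossing partitions of {1,…,k} all of whose blocks have even cardinality, each regarded as a poset with the order induced from the refinement order on P(k). Then for all π, σ ∈ NC_h(k), μ_{NC_h(k)}(π,σ) = μ_{NC(k)}(π,σ). -/
open Classical in
/-- The Möbius function of a finite poset:
`μ(p,p) = 1`, `μ(p,q) = -∑_{p ≤ r < q} μ(p,r)` for `p < q`, and `μ(p,q) = 0` otherwise. -/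
noncomputable def moebius {Q : Type*} [PartialOrder Q] [Finite Q] (p q : Q) : ℤ :=
  if p = q then 1
  else if p < q then
    - ∑ r ∈ (Set.toFinite {r : Q | p ≤ r ∧ r < q}).toFinset.attach, moebius p (r : Q)
  else 0
termination_by {r : Q | r < q}.ncard
decreasing_by
  have hr := (Set.Finite.mem_toFinset _).mp r.2
  have h1 : {s : Q | s < (r : Q)} ⊆ {s : Q | s < q} := fun s hs => lt_trans hs hr.2
  have h2 : {s : Q | s < (r : Q)} ⊂ {s : Q | s < q} :=
    (Set.ssubset_iff_of_subset h1).mpr ⟨r, hr.2, fun hrr => lt_irrefl _ hrr⟩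
  exact Set.ncard_lt_ncard h2 (Set.toFinite _)

instance setoidFinite {α : Type*} [Finite α] : Finite (Setoid α) :=
  Finite.of_injective (fun s : Setoid α => s.r) (by
    intro a b h
    cases a; cases b
    simp only at h
    subst h
    rfl)

/-- The block of `v` in the partition `π`. -/
def block {α : Type*} (π : Setoid α) (v : α) : Set α := {w : α | π.r v w}

/-- A partition all of whose blocks have even cardinality. -/
def EvenBlocks {k : ℕ} (π : Setoid (Fin k)) : Prop :=
  ∀ v : Fin k, Even (block π v).ncard

/-- A noncrossing partition of `{1,…,k}`. -/
def Noncrossing {k : ℕ} (π : Setoid (Fin k)) : Prop :=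
  ∀ s₁ t₁ s₂ t₂ : Fin k, s₁ < t₁ → t₁ < s₂ → s₂ < t₂ →
    π.r s₁ s₂ → π.r t₁ t₂ → π.r s₁ t₁

open Classical in
lemma evenBlocks_of_le {k : ℕ} {π ρ : Setoid (Fin k)} (h : π ≤ ρ)
    (hπ : EvenBlocks π) : EvenBlocks ρ := by
  intro v
  rw [Set.ncard_eq_toFinset_card']
  rw [Finset.card_eq_sum_card_fiberwise
    (f := fun x => (Quotient.mk π x : Quotient π))
    (t := ((block ρ v).toFinset).image (fun x => (Quotient.mk π x)))
    (fun x hx => Finset.mem_image_of_mem _ hx)]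
  rw [even_iff_two_dvd]
  refine Finset.dvd_sum ?_
  intro b hb
  obtain ⟨w, hw, rfl⟩ := Finset.mem_image.mp hb
  rw [Set.mem_toFinset] at hw
  have hfe : Finset.filter (fun x => Quotient.mk π x = Quotient.mk π w)
      (block ρ v).toFinset = (block π w).toFinset := by
    ext x
    simp only [Finset.mem_filter, Set.mem_toFinset, Quotient.eq]
    constructor
    · rintro ⟨_, hx⟩
      exact π.symm hx
    · intro hx
      exact ⟨ρ.trans hw (h hx), π.symm hx⟩
  rw [hfe]
  rw [← even_iff_two_dvd, ← Set.ncard_eq_toFinset_card']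
  exact hπ w

/-- `μ_{NC_h(k)} = μ_{NC(k)}` on noncrossing partitions with even block sizes. -/
theorem moebius_noncrossingEven_eq {k : ℕ}
    (π σ : {x : Setoid (Fin k) // Noncrossing x ∧ EvenBlocks x}) :
    moebius π σ =
      moebius (⟨π.1, π.2.1⟩ : {x : Setoid (Fin k) // Noncrossing x})
              (⟨σ.1, σ.2.1⟩ : {x : Setoid (Fin k) // Noncrossing x}) := by
  rw [moebius, moebius]
  have heq : (π = σ) ↔ ((⟨π.1, π.2.1⟩ : {x : Setoid (Fin k) // Noncrossing x}) = ⟨σ.1, σ.2.1⟩) := by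
    simp [Subtype.ext_iff]
  have hlt : (π < σ) ↔ ((⟨π.1, π.2.1⟩ : {x : Setoid (Fin k) // Noncrossing x}) < ⟨σ.1, σ.2.1⟩) := by
    rw [Subtype.mk_lt_mk, ← Subtype.coe_lt_coe]
  by_cases h1 : π = σ
  · rw [if_pos h1, if_pos (heq.mp h1)]
  · rw [if_neg h1, if_neg (fun hc => h1 (heq.mpr hc))]
    by_cases h2 : π < σ
    · rw [if_pos h2, if_pos (hlt.mp h2)]
      congr 1
      refine Finset.sum_nbij'
        (i := fun r => ⟨⟨r.1.1, r.1.2.1⟩, by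
          have hr := (Set.Finite.mem_toFinset _).mp r.2
          rw [Set.Finite.mem_toFinset]
          exact ⟨hr.1, hr.2⟩⟩)
        (j := fun s => ⟨⟨s.1.1, s.1.2, evenBlocks_of_le
            ((Set.Finite.mem_toFinset _).mp s.2).1 π.2.2⟩, by
          have hs := (Set.Finite.mem_toFinset _).mp s.2
          rw [Set.Finite.mem_toFinset]
          exact ⟨hs.1, hs.2⟩⟩)
        (fun a _ => Finset.mem_attach _ _) (fun a _ => Finset.mem_attach _ _)
        (fun a _ => by apply Subtype.ext; apply Subtype.ext; rfl)
        (fun a _ => by apply Subtype.ext; apply Subtype.ext; rfl)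
        ?_
      · intro r _
        have hr := (Set.Finite.mem_toFinset _).mp r.2
        exact moebius_noncrossingEven_eq π ⟨r.1.1, r.1.2⟩
    · rw [if_neg h2, if_neg (fun hc => h2 (hlt.mpr hc))]
termination_by {r : {x : Setoid (Fin k) // Noncrossing x ∧ EvenBlocks x} | r < σ}.ncard
decreasing_by
  have hr := (Set.Finite.mem_toFinset _).mp r.2
  have h1 : {s : {x : Setoid (Fin k) // Noncrossing x ∧ EvenBlocks x} | s < r.1} ⊆ {s | s < σ} :=
    fun s hs => lt_trans hs hr.2
  have h2 : {s : {x : Setoid (Fin k) // Noncrossing x ∧ EvenBlocks x} | s < r.1} ⊂ {s | s < σ} :=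
    (Set.ssubset_iff_of_subset h1).mpr ⟨r.1, hr.2, fun hrr => lt_irrefl r.1 hrr⟩
  exact Set.ncard_lt_ncard h2 (Set.toFinite _)
end

section
/- Let (A, φ) be a noncommutative probability space and x ∈ A with φ(x^{2m+1}) = 0 for all m ≥ 0 (x has an even distribution). Then the following are equivalent: (1) x has a symmetrized Rayleigh distribution, i.e. φ(x^{2m}) = m! · φ(x²)^m for all m ≥ 0; (2) for every k ≥ 1 and every balanced partition π ∈ E_h(k) having at least one block of size different from two (i.e. π ∉ E₂(k)), the half-liberated cumulant satisfies γ_φ^{(π)}[x,…,x] = 0. -/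
/-- A balanced partition: each block contains as many odd as even elements of `{1,…,k}`. -/
def BalancedPartition {k : ℕ} (π : Setoid (Fin k)) : Prop :=
  ∀ v : Fin k,
    (block π v ∩ {w : Fin k | (w : ℕ) % 2 = 0}).ncard =
    (block π v ∩ {w : Fin k | (w : ℕ) % 2 = 1}).ncard

noncomputable instance setoidSubtypeFintype {k : ℕ} (p : Setoid (Fin k) → Prop) :
    Fintype {x : Setoid (Fin k) // p x} :=
  Fintype.ofFinite _

open Classical in
/-- `φ^{(σ)}[a₁,…,a_k] = ∏_{V ∈ σ} φ(a_{v₁} ⋯ a_{v_r})`, the product over the blocks of `σ`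
of `φ` applied to the ordered product over each block. -/
noncomputable def blockMomentProd {A : Type*} [Ring A] {k : ℕ} (φ : A → ℂ)
    (σ : Setoid (Fin k)) (a : Fin k → A) : ℂ :=
  ∏ q : Quotient σ,
    φ ((((Finset.univ.filter (fun v : Fin k => Quotient.mk σ v = q)).sort (· ≤ ·)).map a).prod)

open Classical in
/-- The half-liberated cumulant `γ_φ^{(π)}`, for `π` a balanced partition, defined by Möbius
inversion over the poset `E_h(k)` of balanced partitions. -/
noncomputable def halfLibCumulant {A : Type*} [Ring A] {k : ℕ} (φ : A → ℂ)
    (π : {σ : Setoid (Fin k) // BalancedPartition σ}) (a : Fin k → A) : ℂ :=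
  ∑ σ : {σ : Setoid (Fin k) // BalancedPartition σ},
    if σ ≤ π then (moebius σ π : ℂ) * blockMomentProd φ σ.1 a else 0


set_option linter.unusedSectionVars false
set_option linter.unusedVariables false
set_option maxHeartbeats 1000000
section AuxAll

section Basics
variable {k : ℕ}

lemma mem_block {σ : Setoid (Fin k)} {v w : Fin k} : w ∈ block σ v ↔ σ.r v w := Iff.rfl

lemma self_mem_block (σ : Setoid (Fin k)) (v : Fin k) : v ∈ block σ v := σ.refl' v

lemma block_eq_of_rel {σ : Setoid (Fin k)} {v w : Fin k} (h : σ.r v w) :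
    block σ v = block σ w := by
  ext u; exact ⟨fun hu => σ.trans' (σ.symm' h) hu, fun hu => σ.trans' h hu⟩

lemma ncard_setOf_eq_card {P : Fin k → Prop} :
    ({w : Fin k | P w}).ncard = Nat.card {w : Fin k // P w} := by
  rw [← Nat.card_coe_set_eq]
  rfl

/-- parity split of any set -/
lemma ncard_parity_split (S : Set (Fin k)) :
    S.ncard = (S ∩ {w : Fin k | (w : ℕ) % 2 = 0}).ncard
      + (S ∩ {w : Fin k | (w : ℕ) % 2 = 1}).ncard := by
  rw [← Set.ncard_union_eq]
  · congr 1
    ext w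
    simp only [Set.mem_union, Set.mem_inter_iff, Set.mem_setOf_eq]
    have := Nat.mod_two_eq_zero_or_one (w : ℕ)
    tauto
  · rw [Set.disjoint_iff]
    rintro w ⟨⟨-, h0⟩, ⟨-, h1⟩⟩
    simp only [Set.mem_setOf_eq] at h0 h1
    exact absurd h1 (by omega)

lemma block_ncard_even {σ : Setoid (Fin k)} (hσ : BalancedPartition σ) (v : Fin k) :
    (block σ v).ncard = 2 * (block σ v ∩ {w : Fin k | (w : ℕ) % 2 = 0}).ncard := by
  rw [ncard_parity_split (block σ v), ← hσ v]; ring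

lemma block_even_pos {σ : Setoid (Fin k)} (hσ : BalancedPartition σ) (v : Fin k) :
    1 ≤ (block σ v ∩ {w : Fin k | (w : ℕ) % 2 = 0}).ncard := by
  by_contra h
  have h0 : (block σ v ∩ {w : Fin k | (w : ℕ) % 2 = 0}).ncard = 0 := by omega
  have := block_ncard_even hσ v
  rw [h0, mul_zero] at this
  have hmem := self_mem_block σ v
  have := Set.ncard_eq_zero (Set.toFinite (block σ v)) |>.mp this
  rw [this] at hmem
  exact hmem

lemma block_ncard_two_le {σ : Setoid (Fin k)} (hσ : BalancedPartition σ) (v : Fin k) :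
    2 ≤ (block σ v).ncard := by
  have := block_ncard_even hσ v
  have := block_even_pos hσ v
  omega

end Basics

section Pairing
variable {k : ℕ}

def IsPairing (τ : Setoid (Fin k)) : Prop := ∀ v, (block τ v).ncard = 2

lemma parity_parts_one {τ : Setoid (Fin k)} (hb : BalancedPartition τ) (h2 : IsPairing τ)
    (v : Fin k) :
    (block τ v ∩ {w : Fin k | (w : ℕ) % 2 = 0}).ncard = 1 ∧
    (block τ v ∩ {w : Fin k | (w : ℕ) % 2 = 1}).ncard = 1 := by
  have ha := hb v
  have hs := ncard_parity_split (block τ v)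
  rw [h2 v] at hs
  omega

lemma opp_part_ncard {τ : Setoid (Fin k)} (hb : BalancedPartition τ) (h2 : IsPairing τ)
    (v : Fin k) :
    (block τ v ∩ {w : Fin k | (w : ℕ) % 2 = 1 - (v : ℕ) % 2}).ncard = 1 := by
  obtain ⟨he, ho⟩ := parity_parts_one hb h2 v
  rcases Nat.mod_two_eq_zero_or_one (v : ℕ) with h | h <;> rw [h]
  · simpa using ho
  · simpa using he

lemma same_part_ncard {τ : Setoid (Fin k)} (hb : BalancedPartition τ) (h2 : IsPairing τ)
    (v : Fin k) :
    (block τ v ∩ {w : Fin k | (w : ℕ) % 2 = (v : ℕ) % 2}).ncard = 1 := by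
  obtain ⟨he, ho⟩ := parity_parts_one hb h2 v
  rcases Nat.mod_two_eq_zero_or_one (v : ℕ) with h | h <;> rw [h]
  · exact he
  · exact ho

lemma same_part_eq {τ : Setoid (Fin k)} (hb : BalancedPartition τ) (h2 : IsPairing τ)
    (v : Fin k) :
    block τ v ∩ {w : Fin k | (w : ℕ) % 2 = (v : ℕ) % 2} = {v} := by
  obtain ⟨a, ha⟩ := Set.ncard_eq_one.mp (same_part_ncard hb h2 v)
  have hv : v ∈ block τ v ∩ {w : Fin k | (w : ℕ) % 2 = (v : ℕ) % 2} :=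
    ⟨self_mem_block τ v, rfl⟩
  rw [ha] at hv ⊢
  rw [Set.mem_singleton_iff] at hv
  rw [hv]

open Classical in
noncomputable def opp (τ : Setoid (Fin k)) (v : Fin k) : Fin k :=
  if h : (block τ v ∩ {w : Fin k | (w : ℕ) % 2 = 1 - (v : ℕ) % 2}).ncard = 1 then
    (Set.ncard_eq_one.mp h).choose
  else v

lemma opp_part_eq {τ : Setoid (Fin k)} (hb : BalancedPartition τ) (h2 : IsPairing τ)
    (v : Fin k) :
    block τ v ∩ {w : Fin k | (w : ℕ) % 2 = 1 - (v : ℕ) % 2} = {opp τ v} := by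
  rw [opp, dif_pos (opp_part_ncard hb h2 v)]
  exact (Set.ncard_eq_one.mp (opp_part_ncard hb h2 v)).choose_spec

lemma opp_mem {τ : Setoid (Fin k)} (hb : BalancedPartition τ) (h2 : IsPairing τ)
    (v : Fin k) : opp τ v ∈ block τ v := by
  have := opp_part_eq hb h2 v
  have h : opp τ v ∈ block τ v ∩ {w : Fin k | (w : ℕ) % 2 = 1 - (v : ℕ) % 2} := by
    rw [this]; rfl
  exact h.1

lemma opp_parity {τ : Setoid (Fin k)} (hb : BalancedPartition τ) (h2 : IsPairing τ)
    (v : Fin k) : ((opp τ v : Fin k) : ℕ) % 2 = 1 - (v : ℕ) % 2 := by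
  have := opp_part_eq hb h2 v
  have h : opp τ v ∈ block τ v ∩ {w : Fin k | (w : ℕ) % 2 = 1 - (v : ℕ) % 2} := by
    rw [this]; rfl
  exact h.2

lemma eq_opp_of {τ : Setoid (Fin k)} (hb : BalancedPartition τ) (h2 : IsPairing τ)
    {v w : Fin k} (hw : w ∈ block τ v) (hp : ((w : ℕ) % 2) ≠ ((v : ℕ) % 2)) :
    w = opp τ v := by
  have h1 : (w : ℕ) % 2 = 1 - (v : ℕ) % 2 := by
    have := Nat.mod_two_eq_zero_or_one (v : ℕ)
    have := Nat.mod_two_eq_zero_or_one (w : ℕ)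
    omega
  have : w ∈ block τ v ∩ {w : Fin k | (w : ℕ) % 2 = 1 - (v : ℕ) % 2} := ⟨hw, h1⟩
  rw [opp_part_eq hb h2 v] at this
  exact this

lemma opp_ne {τ : Setoid (Fin k)} (hb : BalancedPartition τ) (h2 : IsPairing τ)
    (v : Fin k) : opp τ v ≠ v := by
  intro h
  have := opp_parity hb h2 v
  rw [h] at this
  have := Nat.mod_two_eq_zero_or_one (v : ℕ)
  omega

lemma opp_opp {τ : Setoid (Fin k)} (hb : BalancedPartition τ) (h2 : IsPairing τ)
    (v : Fin k) : opp τ (opp τ v) = v := by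
  have hmem : v ∈ block τ (opp τ v) := by
    rw [← block_eq_of_rel (mem_block.mp (opp_mem hb h2 v))]
    exact self_mem_block τ v
  refine (eq_opp_of hb h2 hmem ?_).symm
  have := opp_parity hb h2 v
  have := Nat.mod_two_eq_zero_or_one (v : ℕ)
  omega

lemma rel_iff_opp {τ : Setoid (Fin k)} (hb : BalancedPartition τ) (h2 : IsPairing τ)
    (v w : Fin k) : τ.r v w ↔ w = v ∨ w = opp τ v := by
  constructor
  · intro h
    by_cases hp : ((w : ℕ) % 2) = ((v : ℕ) % 2)
    · left
      have : w ∈ block τ v ∩ {u : Fin k | (u : ℕ) % 2 = (v : ℕ) % 2} := ⟨h, hp⟩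
      rw [same_part_eq hb h2 v] at this
      exact this
    · exact Or.inr (eq_opp_of hb h2 h hp)
  · rintro (rfl | rfl)
    · exact τ.refl' w
    · exact mem_block.mp (opp_mem hb h2 v)

lemma pairing_minimal {τ σ : Setoid (Fin k)} (hτb : BalancedPartition τ)
    (hσb : BalancedPartition σ) (hσ2 : IsPairing σ) (h : τ ≤ σ) : τ = σ := by
  have hblock : ∀ v, block τ v = block σ v := by
    intro v
    refine Set.eq_of_subset_of_ncard_le (fun w hw => h hw) ?_ (Set.toFinite _)
    rw [hσ2 v]
    exact block_ncard_two_le hτb v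
  ext a b
  constructor
  · intro hab; exact h hab
  · intro hab
    have : b ∈ block σ a := hab
    rw [← hblock a] at this
    exact this

end Pairing

section Count
variable {k : ℕ}

abbrev Ev (σ : Setoid (Fin k)) (q : Quotient σ) : Type :=
  {v : Fin k // Quotient.mk σ v = q ∧ (v : ℕ) % 2 = 0}

abbrev Od (σ : Setoid (Fin k)) (q : Quotient σ) : Type :=
  {v : Fin k // Quotient.mk σ v = q ∧ (v : ℕ) % 2 = 1}

noncomputable def pm (σ : Setoid (Fin k)) (G : ∀ q : Quotient σ, Ev σ q ≃ Od σ q)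
    (v : Fin k) : Fin k :=
  if h : (v : ℕ) % 2 = 0 then ((G (Quotient.mk σ v)) ⟨v, rfl, h⟩).1
  else ((G (Quotient.mk σ v)).symm ⟨v, rfl, by omega⟩).1

lemma G_congr {σ : Setoid (Fin k)} (G : ∀ q : Quotient σ, Ev σ q ≃ Od σ q)
    {q q' : Quotient σ} (h : q = q') (e : Ev σ q) (e' : Ev σ q') (hv : e.1 = e'.1) :
    ((G q) e).1 = ((G q') e').1 := by
  subst h
  have : e = e' := Subtype.ext hv
  subst this
  rfl

lemma G_symm_congr {σ : Setoid (Fin k)} (G : ∀ q : Quotient σ, Ev σ q ≃ Od σ q)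
    {q q' : Quotient σ} (h : q = q') (o : Od σ q) (o' : Od σ q') (hv : o.1 = o'.1) :
    ((G q).symm o).1 = ((G q').symm o').1 := by
  subst h
  have : o = o' := Subtype.ext hv
  subst this
  rfl

lemma pm_class {σ : Setoid (Fin k)} (G : ∀ q : Quotient σ, Ev σ q ≃ Od σ q) (v : Fin k) :
    Quotient.mk σ (pm σ G v) = Quotient.mk σ v := by
  rw [pm]
  split
  · exact ((G (Quotient.mk σ v)) ⟨v, rfl, by assumption⟩).2.1
  · exact ((G (Quotient.mk σ v)).symm ⟨v, rfl, by omega⟩).2.1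

lemma pm_parity {σ : Setoid (Fin k)} (G : ∀ q : Quotient σ, Ev σ q ≃ Od σ q) (v : Fin k) :
    ((pm σ G v : Fin k) : ℕ) % 2 = 1 - (v : ℕ) % 2 := by
  rw [pm]
  split
  · have h2 := ((G (Quotient.mk σ v)) ⟨v, rfl, by assumption⟩).2.2
    omega
  · have h2 := ((G (Quotient.mk σ v)).symm ⟨v, rfl, by omega⟩).2.2
    omega

lemma pm_ne {σ : Setoid (Fin k)} (G : ∀ q : Quotient σ, Ev σ q ≃ Od σ q) (v : Fin k) :
    pm σ G v ≠ v := by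
  intro h
  have := pm_parity G v
  rw [h] at this
  omega

lemma pm_pm {σ : Setoid (Fin k)} (G : ∀ q : Quotient σ, Ev σ q ≃ Od σ q) (v : Fin k) :
    pm σ G (pm σ G v) = v := by
  by_cases h : (v : ℕ) % 2 = 0
  · set w : Od σ (Quotient.mk σ v) := (G (Quotient.mk σ v)) ⟨v, rfl, h⟩ with hw
    have hpm : pm σ G v = w.1 := by rw [pm, dif_pos h]
    have hwodd : ((w.1 : Fin k) : ℕ) % 2 = 1 := w.2.2
    rw [hpm, pm, dif_neg (by omega)]
    have hcl : Quotient.mk σ w.1 = Quotient.mk σ v := w.2.1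
    rw [G_symm_congr G hcl ⟨w.1, rfl, by omega⟩ ⟨w.1, hcl, hwodd⟩ rfl]
    have : (⟨w.1, hcl, hwodd⟩ : Od σ (Quotient.mk σ v)) = w := Subtype.ext rfl
    rw [this, hw, Equiv.symm_apply_apply]
  · set w : Ev σ (Quotient.mk σ v) := (G (Quotient.mk σ v)).symm ⟨v, rfl, by omega⟩ with hw
    have hpm : pm σ G v = w.1 := by rw [pm, dif_neg h]
    have hweven : ((w.1 : Fin k) : ℕ) % 2 = 0 := w.2.2
    rw [hpm, pm, dif_pos hweven]
    have hcl : Quotient.mk σ w.1 = Quotient.mk σ v := w.2.1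
    rw [G_congr G hcl ⟨w.1, rfl, hweven⟩ ⟨w.1, hcl, hweven⟩ rfl]
    have : (⟨w.1, hcl, hweven⟩ : Ev σ (Quotient.mk σ v)) = w := Subtype.ext rfl
    rw [this, hw, Equiv.apply_symm_apply]

noncomputable def pairingOf (σ : Setoid (Fin k)) (G : ∀ q : Quotient σ, Ev σ q ≃ Od σ q) :
    Setoid (Fin k) where
  r v w := w = v ∨ w = pm σ G v
  iseqv := by
    constructor
    · intro v; exact Or.inl rfl
    · rintro v w (rfl | rfl)
      · exact Or.inl rfl
      · exact Or.inr (pm_pm G v).symm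
    · rintro u v w (rfl | rfl) (rfl | rfl)
      · exact Or.inl rfl
      · exact Or.inr rfl
      · exact Or.inr rfl
      · rw [pm_pm G u]; exact Or.inl rfl

lemma block_pairingOf (σ : Setoid (Fin k)) (G : ∀ q : Quotient σ, Ev σ q ≃ Od σ q)
    (v : Fin k) : block (pairingOf σ G) v = {v, pm σ G v} := by
  ext w
  simp only [mem_block, Set.mem_insert_iff, Set.mem_singleton_iff]
  exact Iff.rfl

lemma pairingOf_isPairing (σ : Setoid (Fin k)) (G : ∀ q : Quotient σ, Ev σ q ≃ Od σ q) :
    IsPairing (pairingOf σ G) := by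
  intro v
  rw [block_pairingOf]
  exact Set.ncard_pair (Ne.symm (pm_ne G v))

lemma pairingOf_balanced (σ : Setoid (Fin k)) (G : ∀ q : Quotient σ, Ev σ q ≃ Od σ q) :
    BalancedPartition (pairingOf σ G) := by
  intro v
  rw [block_pairingOf]
  have hp := pm_parity G v
  have hv2 := Nat.mod_two_eq_zero_or_one (v : ℕ)
  have hne := pm_ne G v
  rcases hv2 with h | h
  · have he : ({v, pm σ G v} : Set (Fin k)) ∩ {w : Fin k | (w : ℕ) % 2 = 0} = {v} := by
      ext w
      simp only [Set.mem_inter_iff, Set.mem_insert_iff, Set.mem_singleton_iff,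
        Set.mem_setOf_eq]
      constructor
      · rintro ⟨rfl | rfl, hw⟩; · rfl
        · omega
      · rintro rfl; exact ⟨Or.inl rfl, h⟩
    have ho : ({v, pm σ G v} : Set (Fin k)) ∩ {w : Fin k | (w : ℕ) % 2 = 1} = {pm σ G v} := by
      ext w
      simp only [Set.mem_inter_iff, Set.mem_insert_iff, Set.mem_singleton_iff,
        Set.mem_setOf_eq]
      constructor
      · rintro ⟨rfl | rfl, hw⟩; · omega
        · rfl
      · rintro rfl; exact ⟨Or.inr rfl, by omega⟩
    rw [he, ho, Set.ncard_singleton, Set.ncard_singleton]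
  · have he : ({v, pm σ G v} : Set (Fin k)) ∩ {w : Fin k | (w : ℕ) % 2 = 0} = {pm σ G v} := by
      ext w
      simp only [Set.mem_inter_iff, Set.mem_insert_iff, Set.mem_singleton_iff,
        Set.mem_setOf_eq]
      constructor
      · rintro ⟨rfl | rfl, hw⟩; · omega
        · rfl
      · rintro rfl; exact ⟨Or.inr rfl, by omega⟩
    have ho : ({v, pm σ G v} : Set (Fin k)) ∩ {w : Fin k | (w : ℕ) % 2 = 1} = {v} := by
      ext w
      simp only [Set.mem_inter_iff, Set.mem_insert_iff, Set.mem_singleton_iff,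
        Set.mem_setOf_eq]
      constructor
      · rintro ⟨rfl | rfl, hw⟩; · rfl
        · omega
      · rintro rfl; exact ⟨Or.inl rfl, h⟩
    rw [he, ho, Set.ncard_singleton, Set.ncard_singleton]

lemma pairingOf_le (σ : Setoid (Fin k)) (G : ∀ q : Quotient σ, Ev σ q ≃ Od σ q) :
    pairingOf σ G ≤ σ := by
  rintro v w (rfl | rfl)
  · exact σ.refl' w
  · exact σ.symm' (Quotient.exact (pm_class G v))

end Count

section Count2
variable {k : ℕ}

noncomputable def toFam (σ τ : Setoid (Fin k)) (hb : BalancedPartition τ) (h2 : IsPairing τ)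
    (hle : τ ≤ σ) (q : Quotient σ) : Ev σ q ≃ Od σ q where
  toFun e := ⟨opp τ e.1, by
      have h := hle (mem_block.mp (opp_mem hb h2 e.1))
      exact (Quotient.sound (σ.symm' h)).trans e.2.1, by
      have := opp_parity hb h2 e.1
      have := e.2.2
      omega⟩
  invFun o := ⟨opp τ o.1, by
      have h := hle (mem_block.mp (opp_mem hb h2 o.1))
      exact (Quotient.sound (σ.symm' h)).trans o.2.1, by
      have := opp_parity hb h2 o.1
      have := o.2.2
      omega⟩
  left_inv e := Subtype.ext (opp_opp hb h2 e.1)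
  right_inv o := Subtype.ext (opp_opp hb h2 o.1)

def PairingsBelow (σ : Setoid (Fin k)) : Type :=
  {τ : Setoid (Fin k) // BalancedPartition τ ∧ IsPairing τ ∧ τ ≤ σ}

lemma pm_toFam (σ τ : Setoid (Fin k)) (hb : BalancedPartition τ) (h2 : IsPairing τ)
    (hle : τ ≤ σ) (v : Fin k) : pm σ (toFam σ τ hb h2 hle) v = opp τ v := by
  by_cases h : (v : ℕ) % 2 = 0
  · rw [pm, dif_pos h]; rfl
  · rw [pm, dif_neg h]
    show ((toFam σ τ hb h2 hle (Quotient.mk σ v)).symm ⟨v, rfl, by omega⟩).1 = _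
    rw [toFam]
    rfl

noncomputable def pairingsEquiv (σ : Setoid (Fin k)) :
    PairingsBelow σ ≃ ∀ q : Quotient σ, Ev σ q ≃ Od σ q where
  toFun τ := toFam σ τ.1 τ.2.1 τ.2.2.1 τ.2.2.2
  invFun G := ⟨pairingOf σ G, pairingOf_balanced σ G, pairingOf_isPairing σ G,
    pairingOf_le σ G⟩
  left_inv := by
    rintro ⟨τ, hb, h2, hle⟩
    apply Subtype.ext
    show pairingOf σ (toFam σ τ hb h2 hle) = τ
    ext v w
    show (w = v ∨ w = pm σ (toFam σ τ hb h2 hle) v) ↔ τ.r v w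
    rw [pm_toFam, rel_iff_opp hb h2]
  right_inv := by
    intro G
    funext q
    apply Equiv.ext
    intro e
    apply Subtype.ext
    show opp (pairingOf σ G) e.1 = ((G q) e).1
    have hbG := pairingOf_balanced σ G
    have h2G := pairingOf_isPairing σ G
    have hpm : pm σ G e.1 = ((G q) e).1 := by
      rw [pm, dif_pos e.2.2]
      rw [G_congr G e.2.1 ⟨e.1, rfl, e.2.2⟩ ⟨e.1, e.2⟩ rfl]
    refine (eq_opp_of hbG h2G ?_ ?_).symm
    · rw [block_pairingOf]
      right
      rw [← hpm]
      rfl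
    · have := ((G q) e).2.2
      have := e.2.2
      omega

open Classical in
lemma card_Ev_eq_card_Od {σ : Setoid (Fin k)} (hσ : BalancedPartition σ) (q : Quotient σ) :
    Nat.card (Ev σ q) = Nat.card (Od σ q) := by
  induction q using Quotient.ind with
  | _ v =>
    have he : block σ v ∩ {w : Fin k | (w : ℕ) % 2 = 0}
        = {w : Fin k | Quotient.mk σ w = Quotient.mk σ v ∧ (w : ℕ) % 2 = 0} := by
      ext w
      simp only [Set.mem_inter_iff, mem_block, Set.mem_setOf_eq]
      constructor
      · rintro ⟨h1, h2⟩; exact ⟨Quotient.sound (σ.symm' h1), h2⟩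
      · rintro ⟨h1, h2⟩; exact ⟨σ.symm' (Quotient.exact h1), h2⟩
    have ho : block σ v ∩ {w : Fin k | (w : ℕ) % 2 = 1}
        = {w : Fin k | Quotient.mk σ w = Quotient.mk σ v ∧ (w : ℕ) % 2 = 1} := by
      ext w
      simp only [Set.mem_inter_iff, mem_block, Set.mem_setOf_eq]
      constructor
      · rintro ⟨h1, h2⟩; exact ⟨Quotient.sound (σ.symm' h1), h2⟩
      · rintro ⟨h1, h2⟩; exact ⟨σ.symm' (Quotient.exact h1), h2⟩
    have := hσ v
    rw [he, ho, ncard_setOf_eq_card, ncard_setOf_eq_card] at this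
    exact this

open Classical in
lemma count_pairings {σ : Setoid (Fin k)} (hσ : BalancedPartition σ) :
    Nat.card (PairingsBelow σ)
      = ∏ q : Quotient σ, (Nat.card (Ev σ q)).factorial := by
  rw [Nat.card_congr (pairingsEquiv σ)]
  rw [Nat.card_pi]
  congr 1
  funext q
  have : Nonempty (Ev σ q ≃ Od σ q) := by
    have h1 : Nat.card (Ev σ q) = Nat.card (Od σ q) := card_Ev_eq_card_Od hσ q
    rw [Nat.card_eq_fintype_card, Nat.card_eq_fintype_card] at h1
    exact ⟨Fintype.equivOfCardEq h1⟩
  obtain ⟨e⟩ := this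
  rw [Nat.card_eq_fintype_card, Fintype.card_equiv e, Nat.card_eq_fintype_card]

end Count2

section BMP
variable {A : Type*} [Ring A] {k : ℕ}

open Classical in
lemma blockMomentProd_const (φ : A → ℂ) (σ : Setoid (Fin k)) (x : A) :
    blockMomentProd φ σ (fun _ => x)
      = ∏ q : Quotient σ,
          φ (x ^ (Finset.univ.filter (fun v : Fin k => Quotient.mk σ v = q)).card) := by
  rw [blockMomentProd]
  apply Finset.prod_congr rfl
  intro q _
  congr 1
  rw [List.map_const', List.prod_replicate, Finset.length_sort]

open Classical in
lemma fiber_card_eq_ncard (σ : Setoid (Fin k)) (v : Fin k) :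
    (Finset.univ.filter (fun w : Fin k => Quotient.mk σ w = Quotient.mk σ v)).card
      = (block σ v).ncard := by
  have : block σ v
      = ↑(Finset.univ.filter (fun w : Fin k => Quotient.mk σ w = Quotient.mk σ v)) := by
    ext w
    simp only [mem_block, Finset.coe_filter, Finset.mem_univ, true_and, Set.mem_setOf_eq]
    constructor
    · intro h; exact Quotient.sound (σ.symm' h)
    · intro h; exact σ.symm' (Quotient.exact h)
  rw [this, Set.ncard_coe_finset]

open Classical in
lemma ncard_block_inter_even (σ : Setoid (Fin k)) (v : Fin k) :
    (block σ v ∩ {w : Fin k | (w : ℕ) % 2 = 0}).ncard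
      = Nat.card (Ev σ (Quotient.mk σ v)) := by
  have he : block σ v ∩ {w : Fin k | (w : ℕ) % 2 = 0}
      = {w : Fin k | Quotient.mk σ w = Quotient.mk σ v ∧ (w : ℕ) % 2 = 0} := by
    ext w
    simp only [Set.mem_inter_iff, mem_block, Set.mem_setOf_eq]
    constructor
    · rintro ⟨h1, h2⟩; exact ⟨Quotient.sound (σ.symm' h1), h2⟩
    · rintro ⟨h1, h2⟩; exact ⟨σ.symm' (Quotient.exact h1), h2⟩
  rw [he, ncard_setOf_eq_card]

open Classical in
lemma fiber_card_balanced {σ : Setoid (Fin k)} (hσ : BalancedPartition σ) (q : Quotient σ) :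
    (Finset.univ.filter (fun v : Fin k => Quotient.mk σ v = q)).card
      = 2 * Nat.card (Ev σ q) := by
  induction q using Quotient.ind with
  | _ v =>
    rw [fiber_card_eq_ncard σ v, block_ncard_even hσ v, ncard_block_inter_even σ v]

open Classical in
lemma sum_fiber_card (σ : Setoid (Fin k)) :
    ∑ q : Quotient σ, (Finset.univ.filter (fun v : Fin k => Quotient.mk σ v = q)).card = k := by
  have := Finset.card_eq_sum_card_fiberwise
    (f := fun v : Fin k => Quotient.mk σ v) (s := Finset.univ) (t := Finset.univ)
    (fun x _ => Finset.mem_univ _)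
  rw [Finset.card_univ, Fintype.card_fin] at this
  exact this.symm

open Classical in
lemma sum_bq {σ : Setoid (Fin k)} (hσ : BalancedPartition σ) :
    2 * ∑ q : Quotient σ, Nat.card (Ev σ q) = k := by
  have h1 : ∑ q : Quotient σ, 2 * Nat.card (Ev σ q)
      = ∑ q : Quotient σ, (Finset.univ.filter (fun v : Fin k => Quotient.mk σ v = q)).card :=
    Finset.sum_congr rfl (fun q _ => (fiber_card_balanced hσ q).symm)
  rw [Finset.mul_sum, h1, sum_fiber_card]

end BMP

section Evens

def evEquiv (m : ℕ) : {v : Fin (2 * m) // (v : ℕ) % 2 = 0} ≃ Fin m where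
  toFun v := ⟨(v.1 : ℕ) / 2, by have := v.1.2; omega⟩
  invFun j := ⟨⟨2 * j.1, by have := j.2; omega⟩, show (2 * (j : ℕ)) % 2 = 0 by omega⟩
  left_inv v := Subtype.ext (Fin.ext (show 2 * ((v.1 : ℕ) / 2) = (v.1 : ℕ) from by
    have := v.2; omega))
  right_inv j := Fin.ext (show (2 * (j : ℕ)) / 2 = (j : ℕ) from by omega)

def odEquiv (m : ℕ) : {v : Fin (2 * m) // (v : ℕ) % 2 = 1} ≃ Fin m where
  toFun v := ⟨(v.1 : ℕ) / 2, by have := v.1.2; omega⟩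
  invFun j := ⟨⟨2 * j.1 + 1, by have := j.2; omega⟩, show (2 * (j : ℕ) + 1) % 2 = 1 by omega⟩
  left_inv v := Subtype.ext (Fin.ext (show 2 * ((v.1 : ℕ) / 2) + 1 = (v.1 : ℕ) from by
    have := v.2; omega))
  right_inv j := Fin.ext (show (2 * (j : ℕ) + 1) / 2 = (j : ℕ) from by omega)

lemma ncard_evens (m : ℕ) : ({w : Fin (2 * m) | (w : ℕ) % 2 = 0}).ncard = m := by
  rw [ncard_setOf_eq_card, Nat.card_congr (evEquiv m), Nat.card_eq_fintype_card,
    Fintype.card_fin]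

lemma ncard_odds (m : ℕ) : ({w : Fin (2 * m) | (w : ℕ) % 2 = 1}).ncard = m := by
  rw [ncard_setOf_eq_card, Nat.card_congr (odEquiv m), Nat.card_eq_fintype_card,
    Fintype.card_fin]

end Evens

section Moebius
variable {Q : Type*} [PartialOrder Q] [Fintype Q] [DecidableEq Q]

lemma moebius_self (p : Q) : moebius p p = 1 := by rw [moebius]; simp

lemma moebius_eq_zero_of_not_le {p q : Q} (h : ¬ p ≤ q) : moebius p q = 0 := by
  rw [moebius]
  have h1 : p ≠ q := by rintro rfl; exact h le_rfl
  have h2 : ¬ p < q := fun hl => h hl.le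
  simp [h1, h2]

open Classical in
lemma moebius_sum_right (p q : Q) :
    ∑ r ∈ Finset.univ.filter (· ≤ q), moebius p r = if p = q then 1 else 0 := by
  have hsub : ∑ r ∈ Finset.univ.filter (· ≤ q), moebius p r
      = ∑ r ∈ Finset.univ.filter (fun r => p ≤ r ∧ r ≤ q), moebius p r := by
    refine (Finset.sum_subset (fun r hr => ?_) (fun r hr hnr => ?_)).symm
    · simp only [Finset.mem_filter, Finset.mem_univ, true_and] at hr ⊢; exact hr.2
    · simp only [Finset.mem_filter, Finset.mem_univ, true_and] at hr hnr
      exact moebius_eq_zero_of_not_le (fun hp => hnr ⟨hp, hr⟩)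
  rw [hsub]
  by_cases hpq : p = q
  · subst hpq
    have : Finset.univ.filter (fun r => p ≤ r ∧ r ≤ p) = {p} := by
      ext r; simp only [Finset.mem_filter, Finset.mem_univ, true_and, Finset.mem_singleton]
      constructor
      · rintro ⟨h1, h2⟩; exact le_antisymm h2 h1
      · rintro rfl; exact ⟨le_rfl, le_rfl⟩
    rw [this, Finset.sum_singleton, moebius_self]; simp
  · by_cases hlt : p < q
    · have hq : q ∈ Finset.univ.filter (fun r => p ≤ r ∧ r ≤ q) := by
        simp [hlt.le]
      rw [← Finset.add_sum_erase _ _ hq]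
      have herase : (Finset.univ.filter (fun r => p ≤ r ∧ r ≤ q)).erase q
          = (Set.toFinite {r : Q | p ≤ r ∧ r < q}).toFinset := by
        ext r
        simp only [Finset.mem_erase, Finset.mem_filter, Finset.mem_univ, true_and,
          Set.Finite.mem_toFinset, Set.mem_setOf_eq]
        constructor
        · rintro ⟨hne, h1, h2⟩; exact ⟨h1, lt_of_le_of_ne h2 hne⟩
        · rintro ⟨h1, h2⟩; exact ⟨h2.ne, h1, h2.le⟩
      have hmu : moebius p q
          = - ∑ r ∈ (Set.toFinite {r : Q | p ≤ r ∧ r < q}).toFinset, moebius p r := by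
        rw [moebius]
        simp only [hpq, hlt, if_false, if_true]
        rw [Finset.sum_attach]
      rw [herase, hmu]
      simp [hpq]
    · have : Finset.univ.filter (fun r => p ≤ r ∧ r ≤ q) = ∅ := by
        ext r
        simp only [Finset.mem_filter, Finset.mem_univ, true_and, Finset.notMem_empty,
          iff_false, not_and]
        intro h1 h2
        exact hlt (lt_of_le_of_ne (h1.trans h2) hpq) |>.elim
      rw [this]
      simp [hpq]

open Classical in
/-- zeta matrix -/
noncomputable def zmat : Matrix Q Q ℤ := fun p q => if p ≤ q then 1 else 0

noncomputable def mmat : Matrix Q Q ℤ := fun p q => moebius p q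

open Classical in
lemma mmat_mul_zmat : (mmat : Matrix Q Q ℤ) * zmat = 1 := by
  ext p q
  rw [Matrix.mul_apply]
  simp only [mmat, zmat, mul_ite, mul_one, mul_zero]
  rw [Finset.sum_ite, Finset.sum_const_zero, add_zero]
  rw [moebius_sum_right p q]
  simp [Matrix.one_apply, eq_comm]

open Classical in
lemma zmat_mul_mmat : (zmat : Matrix Q Q ℤ) * mmat = 1 :=
  mul_eq_one_comm.mp mmat_mul_zmat

open Classical in
lemma moebius_sum_left (p q : Q) :
    ∑ r ∈ Finset.univ.filter (fun r => p ≤ r), moebius r q = if p = q then 1 else 0 := by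
  have := congrFun (congrFun zmat_mul_mmat p) q
  rw [Matrix.mul_apply] at this
  simp only [zmat, mmat, ite_mul, one_mul, zero_mul] at this
  rw [Finset.sum_ite, Finset.sum_const_zero, add_zero] at this
  rw [this]
  simp [Matrix.one_apply]

end Moebius

section MoebiusC
variable {Q : Type*} [PartialOrder Q] [Fintype Q] [DecidableEq Q]

open Classical in
lemma sum_ite_moebius_right (t p : Q) :
    ∑ s : Q, (if t ≤ s ∧ s ≤ p then (moebius t s : ℂ) else 0)
      = if t = p then 1 else 0 := by
  have h1 : ∀ s : Q, (if t ≤ s ∧ s ≤ p then (moebius t s : ℂ) else 0)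
      = if s ≤ p then (moebius t s : ℂ) else 0 := by
    intro s
    by_cases h2 : s ≤ p <;> by_cases h3 : t ≤ s <;>
      simp [h2, h3, moebius_eq_zero_of_not_le]
  rw [Finset.sum_congr rfl (fun s _ => h1 s), ← Finset.sum_filter]
  rw [show ∑ s ∈ Finset.univ.filter (· ≤ p), (moebius t s : ℂ)
      = ((∑ s ∈ Finset.univ.filter (· ≤ p), moebius t s : ℤ) : ℂ) by push_cast; rfl]
  rw [moebius_sum_right t p]
  split <;> simp

open Classical in
lemma sum_ite_moebius_left (t p : Q) :
    ∑ s : Q, (if t ≤ s ∧ s ≤ p then (moebius s p : ℂ) else 0)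
      = if t = p then 1 else 0 := by
  have h1 : ∀ s : Q, (if t ≤ s ∧ s ≤ p then (moebius s p : ℂ) else 0)
      = if t ≤ s then (moebius s p : ℂ) else 0 := by
    intro s
    by_cases h2 : s ≤ p <;> by_cases h3 : t ≤ s <;>
      simp [h2, h3, moebius_eq_zero_of_not_le]
  rw [Finset.sum_congr rfl (fun s _ => h1 s), ← Finset.sum_filter]
  rw [show ∑ s ∈ Finset.univ.filter (t ≤ ·), (moebius s p : ℂ)
      = ((∑ s ∈ Finset.univ.filter (t ≤ ·), moebius s p : ℤ) : ℂ) by push_cast; rfl]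
  rw [moebius_sum_left t p]
  split <;> simp

open Classical in
lemma mob_inv (f : Q → ℂ) (p : Q) :
    f p = ∑ s : Q, if s ≤ p then
      (∑ t : Q, if t ≤ s then (moebius t s : ℂ) * f t else 0) else 0 := by
  have h1 : ∀ s : Q, (if s ≤ p then
        (∑ t : Q, if t ≤ s then (moebius t s : ℂ) * f t else 0) else 0)
      = ∑ t : Q, if t ≤ s ∧ s ≤ p then (moebius t s : ℂ) * f t else 0 := by
    intro s
    by_cases h : s ≤ p
    · rw [if_pos h]
      apply Finset.sum_congr rfl
      intro t _
      by_cases h2 : t ≤ s <;> simp [h, h2]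
    · rw [if_neg h]
      rw [Finset.sum_congr rfl (fun t _ => ?_), Finset.sum_const_zero]
      simp [h]
  rw [Finset.sum_congr rfl (fun s _ => h1 s), Finset.sum_comm]
  have h2 : ∀ t : Q, (∑ s : Q, if t ≤ s ∧ s ≤ p then (moebius t s : ℂ) * f t else 0)
      = (if t = p then 1 else 0) * f t := by
    intro t
    rw [Finset.sum_congr rfl (fun s _ => ?_), ← Finset.sum_mul, sum_ite_moebius_right t p]
    by_cases h3 : t ≤ s ∧ s ≤ p <;> simp [h3]
  rw [Finset.sum_congr rfl (fun t _ => h2 t)]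
  rw [Finset.sum_congr rfl (fun t _ => ?_), Finset.sum_ite_eq' Finset.univ p f]
  · simp
  · by_cases h4 : t = p <;> simp [h4]

end MoebiusC
section Glue
variable {A : Type*} [Ring A] {k : ℕ}

open Classical in
lemma card_pb_sum (σ0 : Setoid (Fin k)) :
    ((Nat.card (PairingsBelow σ0) : ℕ) : ℂ)
      = ∑ τ : {σ : Setoid (Fin k) // BalancedPartition σ},
          if IsPairing τ.1 ∧ τ.1 ≤ σ0 then 1 else 0 := by
  have e : PairingsBelow σ0
      ≃ {τ : {σ : Setoid (Fin k) // BalancedPartition σ} // IsPairing τ.1 ∧ τ.1 ≤ σ0} :=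
    { toFun := fun t => ⟨⟨t.1, t.2.1⟩, t.2.2⟩
      invFun := fun t => ⟨t.1.1, t.1.2, t.2⟩
      left_inv := fun t => rfl
      right_inv := fun t => rfl }
  rw [Nat.card_congr e]
  have h : Nat.card {τ : {σ : Setoid (Fin k) // BalancedPartition σ} //
        IsPairing τ.1 ∧ τ.1 ≤ σ0}
      = (Finset.univ.filter
          (fun τ : {σ : Setoid (Fin k) // BalancedPartition σ} =>
            IsPairing τ.1 ∧ τ.1 ≤ σ0)).card := by
    rw [← Fintype.card_subtype]
    exact Nat.card_eq_fintype_card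
  rw [h, Finset.card_filter]
  push_cast
  apply Finset.sum_congr rfl
  intro τ _
  split <;> simp

open Classical in
lemma bmp_of_moments (φ : A → ℂ) (x : A) {σ : Setoid (Fin k)} (hσ : BalancedPartition σ)
    (h1 : ∀ m : ℕ, φ (x ^ (2 * m)) = (Nat.factorial m : ℂ) * (φ (x ^ 2)) ^ m) :
    blockMomentProd φ σ (fun _ => x)
      = ((Nat.card (PairingsBelow σ) : ℕ) : ℂ) * (φ (x ^ 2)) ^ (k / 2) := by
  rw [blockMomentProd_const]
  have hterm : ∀ q : Quotient σ,
      φ (x ^ (Finset.univ.filter (fun v : Fin k => Quotient.mk σ v = q)).card)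
        = ((Nat.card (Ev σ q)).factorial : ℂ) * (φ (x ^ 2)) ^ (Nat.card (Ev σ q)) := by
    intro q
    rw [fiber_card_balanced hσ q, h1 (Nat.card (Ev σ q))]
  rw [Finset.prod_congr rfl (fun q _ => hterm q), Finset.prod_mul_distrib,
    Finset.prod_pow_eq_pow_sum]
  have hs : ∑ q : Quotient σ, Nat.card (Ev σ q) = k / 2 := by
    have := sum_bq hσ
    omega
  rw [hs, count_pairings hσ]
  push_cast
  ring

open Classical in
lemma bmp_pairing (φ : A → ℂ) (x : A) {σ : Setoid (Fin k)} (hσ : BalancedPartition σ)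
    (h2 : IsPairing σ) :
    blockMomentProd φ σ (fun _ => x) = (φ (x ^ 2)) ^ (k / 2) := by
  rw [blockMomentProd_const]
  have hterm : ∀ q : Quotient σ,
      (Finset.univ.filter (fun v : Fin k => Quotient.mk σ v = q)).card = 2 := by
    intro q
    induction q using Quotient.ind with
    | _ v => rw [fiber_card_eq_ncard σ v, h2 v]
  rw [Finset.prod_congr rfl (fun q _ => by rw [hterm q])]
  rw [Finset.prod_const, Finset.card_univ]
  have hcard : 2 * Fintype.card (Quotient σ) = k := by
    have := sum_fiber_card σ
    rw [Finset.sum_congr rfl (fun q _ => hterm q), Finset.sum_const, Finset.card_univ,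
      smul_eq_mul] at this
    omega
  congr 1
  omega

def topS (k : ℕ) : Setoid (Fin k) :=
  ⟨fun _ _ => True, ⟨fun _ => trivial, fun _ => trivial, fun _ _ => trivial⟩⟩

lemma le_topS (σ : Setoid (Fin k)) : σ ≤ topS k := fun _ _ _ => trivial

lemma block_topS (v : Fin k) : block (topS k) v = Set.univ := by
  ext w; simp [block, topS]; exact trivial

lemma topS_balanced (m : ℕ) : BalancedPartition (topS (2 * m)) := by
  intro v
  rw [block_topS, Set.univ_inter, Set.univ_inter, ncard_evens, ncard_odds]

instance topS_quot_subsingleton : Subsingleton (Quotient (topS k)) := by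
  constructor
  intro a b
  induction a using Quotient.ind with
  | _ v =>
    induction b using Quotient.ind with
    | _ w => exact Quotient.sound trivial

open Classical in
lemma bmp_topS (φ : A → ℂ) (x : A) (hk : 0 < k) :
    blockMomentProd φ (topS k) (fun _ => x) = φ (x ^ k) := by
  rw [blockMomentProd_const]
  have q0 : Quotient (topS k) := Quotient.mk _ ⟨0, hk⟩
  rw [Fintype.prod_subsingleton _ q0]
  congr 1
  have : Finset.univ.filter (fun v : Fin k => Quotient.mk (topS k) v = q0)
      = Finset.univ := by
    apply Finset.filter_true_of_mem
    intro v _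
    exact Subsingleton.elim _ _
  rw [this, Finset.card_univ, Fintype.card_fin]

open Classical in
lemma card_Ev_topS (m : ℕ) (q : Quotient (topS (2 * m))) :
    Nat.card (Ev (topS (2 * m)) q) = m := by
  have e : Ev (topS (2 * m)) q ≃ {v : Fin (2 * m) // (v : ℕ) % 2 = 0} :=
    Equiv.subtypeEquivRight (fun v =>
      ⟨fun h => h.2, fun h => ⟨Subsingleton.elim _ _, h⟩⟩)
  rw [Nat.card_congr e, Nat.card_congr (evEquiv m), Nat.card_eq_fintype_card,
    Fintype.card_fin]

open Classical in
lemma card_pairings_topS (m : ℕ) (hm : 0 < m) :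
    Nat.card (PairingsBelow (topS (2 * m))) = m.factorial := by
  rw [count_pairings (topS_balanced m)]
  have q0 : Quotient (topS (2 * m)) := Quotient.mk _ ⟨0, by omega⟩
  rw [Fintype.prod_subsingleton _ q0, card_Ev_topS m q0]

end Glue
section Final
variable {A : Type*} [Ring A] {k : ℕ}

open Classical in
lemma hlc_pairing (φ : A → ℂ) (a : Fin k → A)
    (σ : {σ : Setoid (Fin k) // BalancedPartition σ}) (hp : IsPairing σ.1) :
    halfLibCumulant φ σ a = blockMomentProd φ σ.1 a := by
  rw [halfLibCumulant, Finset.sum_eq_single σ]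
  · rw [if_pos le_rfl, moebius_self, Int.cast_one, one_mul]
  · intro τ _ hne
    by_cases hle : τ ≤ σ
    · exact absurd (Subtype.ext (pairing_minimal τ.2 σ.2 hp hle)) hne
    · rw [if_neg hle]
  · intro h; exact absurd (Finset.mem_univ σ) h

end Final
end AuxAll

/-- An even random variable has a symmetrized Rayleigh distribution (moments
`φ(x^{2m}) = m! φ(x²)^m`) if and only if its half-liberated cumulants vanish on every
balanced partition that is not a pair partition. -/
theorem symmetrizedRayleigh_iff_cumulants {A : Type*} [Ring A] [Algebra ℂ A]
    (φ : A →ₗ[ℂ] ℂ) (hφ1 : φ 1 = 1) (x : A)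
    (heven : ∀ m : ℕ, φ (x ^ (2 * m + 1)) = 0) :
    (∀ m : ℕ, φ (x ^ (2 * m)) = (Nat.factorial m : ℂ) * (φ (x ^ 2)) ^ m) ↔
      (∀ (k : ℕ), 1 ≤ k → ∀ π : {σ : Setoid (Fin k) // BalancedPartition σ},
        ¬ (∀ v : Fin k, (block (π : Setoid (Fin k)) v).ncard = 2) →
        halfLibCumulant (φ : A → ℂ) π (fun _ => x) = 0) := by
  classical
  constructor
  · -- moments → cumulants vanish
    intro h1 k hk π hπ
    have hπ' : ¬ IsPairing π.1 := hπ
    rw [halfLibCumulant]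
    set c : ℂ := φ (x ^ 2) with hc
    have step1 : ∀ σ : {σ : Setoid (Fin k) // BalancedPartition σ},
        (if σ ≤ π then (moebius σ π : ℂ) * blockMomentProd (⇑φ) σ.1 (fun _ => x) else 0)
        = (∑ τ : {σ : Setoid (Fin k) // BalancedPartition σ},
            if IsPairing τ.1 ∧ τ ≤ σ ∧ σ ≤ π then (moebius σ π : ℂ) else 0)
          * c ^ (k / 2) := by
      intro σ
      by_cases hle : σ ≤ π
      · rw [if_pos hle, bmp_of_moments (⇑φ) x σ.2 h1, card_pb_sum σ.1, ← hc,
          ← mul_assoc]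
        congr 1
        rw [Finset.mul_sum]
        apply Finset.sum_congr rfl
        intro τ _
        by_cases hp : IsPairing τ.1 ∧ τ.1 ≤ σ.1
        · rw [if_pos hp, mul_one, if_pos ⟨hp.1, hp.2, hle⟩]
        · rw [if_neg hp, mul_zero, if_neg (by
            rintro ⟨hh1, hh2, -⟩
            exact hp ⟨hh1, hh2⟩)]
      · rw [if_neg hle]
        rw [Finset.sum_congr rfl (fun τ _ => if_neg (by rintro ⟨-, -, h⟩; exact hle h)),
          Finset.sum_const_zero, zero_mul]
    rw [Finset.sum_congr rfl (fun σ _ => step1 σ), ← Finset.sum_mul, Finset.sum_comm]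
    have step2 : ∀ τ : {σ : Setoid (Fin k) // BalancedPartition σ},
        (∑ σ : {σ : Setoid (Fin k) // BalancedPartition σ},
          if IsPairing τ.1 ∧ τ ≤ σ ∧ σ ≤ π then (moebius σ π : ℂ) else 0)
        = if τ = π then (if IsPairing τ.1 then 1 else 0) else 0 := by
      intro τ
      by_cases hp : IsPairing τ.1
      · have : ∀ σ : {σ : Setoid (Fin k) // BalancedPartition σ},
            (if IsPairing τ.1 ∧ τ ≤ σ ∧ σ ≤ π then (moebius σ π : ℂ) else 0)
            = if τ ≤ σ ∧ σ ≤ π then (moebius σ π : ℂ) else 0 := by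
          intro σ
          by_cases h2 : τ ≤ σ ∧ σ ≤ π
          · rw [if_pos ⟨hp, h2⟩, if_pos h2]
          · rw [if_neg (by rintro ⟨-, hh⟩; exact h2 hh), if_neg h2]
        rw [Finset.sum_congr rfl (fun σ _ => this σ), sum_ite_moebius_left τ π]
        by_cases h3 : τ = π
        · subst h3; simp [hp]
        · simp [h3]
      · rw [Finset.sum_congr rfl (fun σ _ => if_neg (by rintro ⟨hh, -⟩; exact hp hh)),
          Finset.sum_const_zero]
        by_cases h3 : τ = π
        · subst h3; simp [hp]
        · simp [h3]
    rw [Finset.sum_congr rfl (fun τ _ => step2 τ),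
      Finset.sum_ite_eq' Finset.univ π (fun τ => if IsPairing τ.1 then (1 : ℂ) else 0)]
    simp [hπ']
  · -- cumulants vanish → moments
    intro hc m
    by_cases hm : m = 0
    · subst hm
      norm_num [hφ1]
    · have hm' : 0 < m := Nat.pos_of_ne_zero hm
      set c : ℂ := φ (x ^ 2) with hcdef
      set πT : {σ : Setoid (Fin (2 * m)) // BalancedPartition σ} :=
        ⟨topS (2 * m), topS_balanced m⟩ with hπT
      have hle : ∀ σ : {σ : Setoid (Fin (2 * m)) // BalancedPartition σ}, σ ≤ πT :=
        fun σ => le_topS σ.1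
      have h0 : φ (x ^ (2 * m)) = blockMomentProd (⇑φ) (topS (2 * m)) (fun _ => x) :=
        (bmp_topS (⇑φ) x (by omega)).symm
      have hinv := mob_inv (Q := {σ : Setoid (Fin (2 * m)) // BalancedPartition σ})
        (fun σ => blockMomentProd (⇑φ) σ.1 (fun _ => x)) πT
      have hrec : ∀ σ : {σ : Setoid (Fin (2 * m)) // BalancedPartition σ},
          (∑ τ : {σ : Setoid (Fin (2 * m)) // BalancedPartition σ},
            if τ ≤ σ then (moebius τ σ : ℂ) * blockMomentProd (⇑φ) τ.1 (fun _ => x) else 0)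
          = halfLibCumulant (⇑φ) σ (fun _ => x) := fun σ => rfl
      rw [h0, hinv]
      rw [Finset.sum_congr rfl (fun σ _ => by rw [hrec σ, if_pos (hle σ)])]
      have hval : ∀ σ : {σ : Setoid (Fin (2 * m)) // BalancedPartition σ},
          halfLibCumulant (⇑φ) σ (fun _ => x)
            = if IsPairing σ.1 then c ^ m else 0 := by
        intro σ
        by_cases hp : IsPairing σ.1
        · rw [if_pos hp, hlc_pairing (⇑φ) _ σ hp, bmp_pairing (⇑φ) x σ.2 hp, ← hcdef]
          congr 1
          omega
        · rw [if_neg hp]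
          exact hc (2 * m) (by omega) σ hp
      rw [Finset.sum_congr rfl (fun σ _ => hval σ)]
      have : ∀ σ : {σ : Setoid (Fin (2 * m)) // BalancedPartition σ},
          (if IsPairing σ.1 then c ^ m else 0)
          = (if IsPairing σ.1 ∧ σ.1 ≤ topS (2 * m) then (1 : ℂ) else 0) * c ^ m := by
        intro σ
        by_cases hp : IsPairing σ.1
        · rw [if_pos hp, if_pos ⟨hp, le_topS σ.1⟩, one_mul]
        · rw [if_neg hp, if_neg (by rintro ⟨hh, -⟩; exact hp hh), zero_mul]
      rw [Finset.sum_congr rfl (fun σ _ => this σ), ← Finset.sum_mul, ← card_pb_sum,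
        card_pairings_topS m hm']
end
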